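/- Let L be a free ℤ-module of finite rank equipped with a symmetric bilinear form B : L × L → ℤ whose extension to L ⊗ ℝ has signature (1, k), i.e. there is a real basis e₀, …, e_k of L ⊗ ℝ with B(eᵢ,eⱼ) = 0 for i ≠ j, B(e₀,e₀) > 0, and B(eᵢ,eᵢ) < 0 for i ≥ 1. Let h ∈ L with B(h,h) > 0. Then the group {f : L ≃ L ℤ-linear : B(f v, f w) = B(v,w) for all v, w, and f(h) = h} is finite. -/

import Mathlib

/-!
For `h` with `B(h,h) > 0`, the form `B` is negative definite on `h^⊥`: a vector `y ⊥ h` with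
`B(y,y) ≥ 0` would span with `h` a plane meeting the negative definite hyperplane `e₀^⊥`.
Hence the majorant `2 B(x,h) B(y,h) - B(h,h) B(x,y)` is positive definite on `L ⊗ ℝ`, and it is
invariant under every isometry fixing `h`. A positive definite form takes each value on only
finitely many lattice vectors (Cauchy–Schwarz against a dual basis bounds the coordinates), and
an automorphism of `L` is determined by the images of a finite generating set.
-/

open TensorProduct
open LinearMap (BilinForm)
open Module (Basis)

theorem Module.Finite.finite_linearEquiv_of_finite_fibers {R M α : Type*} [Semiring R]
    [AddCommMonoid M] [Module R M] [Module.Finite R M] (q : M → α)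
    (hq : ∀ a, {v | q v = a}.Finite) :
    {f : M ≃ₗ[R] M | ∀ v, q (f v) = q v}.Finite := by
  obtain ⟨s, hs⟩ := Module.Finite.fg_top (R := R) (M := M)
  have : ∀ x : s, Finite {v // q v = q x} := fun x => (hq (q x)).to_subtype
  refine Set.finite_coe_iff.mp <| _root_.Finite.of_injective (β := ∀ x : s, {v // q v = q x})
    (fun f x => ⟨f.1 x, f.2 x⟩) fun f g hfg => ?_
  refine Subtype.ext <| LinearEquiv.toLinearMap_injective <| LinearMap.ext_on hs fun x hx => ?_
  exact congrArg Subtype.val (congrFun hfg ⟨x, hx⟩)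

namespace LinearMap.BilinForm

section CommRing

variable {R M ι : Type*} [CommRing R] [AddCommGroup M] [Module R M]

theorem apply_basis_of_iIsOrtho [Fintype ι] {B : BilinForm R M} {e : Basis ι R M}
    (ho : B.iIsOrtho e) (x : M) (j : ι) :
    B x (e j) = e.repr x j * B (e j) (e j) := by
  conv_lhs => rw [← e.sum_repr x]
  rw [map_sum, LinearMap.sum_apply, Finset.sum_eq_single j
    (fun i _ hij => by rw [map_smul, LinearMap.smul_apply, ho hij, smul_zero])
    (fun hj => absurd (Finset.mem_univ j) hj), map_smul, LinearMap.smul_apply, smul_eq_mul]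

theorem apply_self_eq_sum_of_iIsOrtho [Fintype ι] {B : BilinForm R M} {e : Basis ι R M}
    (ho : B.iIsOrtho e) (x : M) :
    B x x = ∑ j, e.repr x j ^ 2 * B (e j) (e j) := by
  conv_lhs => arg 2; rw [← e.sum_repr x]
  simp only [map_sum, map_smul, smul_eq_mul]
  exact Finset.sum_congr rfl fun j _ => by rw [apply_basis_of_iIsOrtho ho]; ring

/-- `B(h,h)` times the Siegel majorant `2 B(x,h) B(y,h) / B(h,h) - B(x,y)` of `B` attached to `h`,
that is `-B(h,h) B(x, s_h y)` for the reflection `s_h` in `h`. -/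
def majorant (B : BilinForm R M) (h : M) : BilinForm R M :=
  (2 : R) • (LinearMap.mul R R).compl₁₂ (B.flip h) (B.flip h) - B h h • B

@[simp]
theorem majorant_apply (B : BilinForm R M) (h x y : M) :
    B.majorant h x y = 2 * (B x h * B y h) - B h h * B x y := by
  simp [majorant]

theorem IsSymm.majorant {B : BilinForm R M} (hB : B.IsSymm) (h : M) : (B.majorant h).IsSymm :=
  ⟨fun x y => by simp only [majorant_apply, hB.eq x y]; ring⟩

end CommRing

section OrderedField

variable {K E : Type*} [Field K] [LinearOrder K] [IsStrictOrderedRing K]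
  [AddCommGroup E] [Module K E]

def NegDefOnOrthogonal (B : BilinForm K E) (u : E) : Prop :=
  ∀ w, B w u = 0 → w ≠ 0 → B w w < 0

theorem negDefOnOrthogonal_of_iIsOrtho {ι : Type*} [Fintype ι] {B : BilinForm K E}
    {e : Basis ι K E} (ho : B.iIsOrtho e) {i₀ : ι} (h₀ : B (e i₀) (e i₀) ≠ 0)
    (hneg : ∀ i, i ≠ i₀ → B (e i) (e i) < 0) : B.NegDefOnOrthogonal (e i₀) := by
  intro w hw hw0
  have hwi₀ : e.repr w i₀ = 0 := by
    rw [apply_basis_of_iIsOrtho ho] at hw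
    exact (mul_eq_zero.mp hw).resolve_right h₀
  have hterm : ∀ i, e.repr w i ^ 2 * B (e i) (e i) ≤ 0 := fun i => by
    rcases eq_or_ne i i₀ with rfl | hi
    · simp [hwi₀]
    · exact mul_nonpos_of_nonneg_of_nonpos (sq_nonneg _) (hneg i hi).le
  obtain ⟨j, hj⟩ : ∃ j, e.repr w j ≠ 0 := by
    by_contra! h
    exact hw0 (e.repr.map_eq_zero_iff.mp (Finsupp.ext h))
  have hj₀ : j ≠ i₀ := by rintro rfl; exact hj hwi₀
  rw [apply_self_eq_sum_of_iIsOrtho ho]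
  calc ∑ i, e.repr w i ^ 2 * B (e i) (e i) < ∑ _i, (0 : K) :=
        Finset.sum_lt_sum (fun i _ => hterm i)
          ⟨j, Finset.mem_univ j, mul_neg_of_pos_of_neg (sq_pos_of_ne_zero hj) (hneg j hj₀)⟩
    _ = 0 := Finset.sum_const_zero

theorem NegDefOnOrthogonal.of_pos {B : BilinForm K E} (hB : B.IsSymm) {u h : E}
    (hu : B.NegDefOnOrthogonal u) (hh : 0 < B h h) : B.NegDefOnOrthogonal h := by
  intro y hy hy0
  by_contra! hyy
  have hhy : B h y = 0 := by rw [hB.eq, hy]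
  -- `z` is the vector of the plane spanned by `h` and `y` that is orthogonal to `u`
  set z := B y u • h - B h u • y
  have hzu : B z u = 0 := by simp only [z, map_sub, map_smul, LinearMap.sub_apply,
    LinearMap.smul_apply, smul_eq_mul]; ring
  have hz : z = 0 := by
    by_contra hz
    have hzz : B z z = B y u ^ 2 * B h h + B h u ^ 2 * B y y := by
      simp only [z, map_sub, map_smul, LinearMap.sub_apply, LinearMap.smul_apply, smul_eq_mul,
        hy, hhy]; ring
    have := hu z hzu hz
    nlinarith [sq_nonneg (B y u), sq_nonneg (B h u)]
  have hyu : B y u = 0 := by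
    have hzh : B z h = B y u * B h h := by
      simp only [z, map_sub, map_smul, LinearMap.sub_apply, LinearMap.smul_apply, smul_eq_mul,
        hy]; ring
    rw [hz, map_zero, LinearMap.zero_apply] at hzh
    exact (mul_eq_zero.mp hzh.symm).resolve_right hh.ne'
  exact (hu y hyu hy0).not_ge hyy

theorem majorant_apply_self_pos {B : BilinForm K E} (hB : B.IsSymm) {h : E} (hh : 0 < B h h)
    (hneg : B.NegDefOnOrthogonal h) {x : E} (hx : x ≠ 0) : 0 < B.majorant h x x := by
  rw [majorant_apply]
  -- the component of `B(h,h) • x` orthogonal to `h`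
  set y := B h h • x - B x h • h
  have hyh : B y h = 0 := by
    simp only [y, map_sub, map_smul, LinearMap.sub_apply, LinearMap.smul_apply, smul_eq_mul]; ring
  have hyy : B y y = B h h * (B h h * B x x - B x h ^ 2) := by
    simp only [y, map_sub, map_smul, LinearMap.sub_apply, LinearMap.smul_apply, smul_eq_mul,
      hB.eq h x]; ring
  refine pos_of_mul_pos_right (a := B h h) ?_ hh.le
  rcases eq_or_ne y 0 with hy | hy
  · have hxh : B x h ≠ 0 := by
      rintro hxh
      have hy' : B h h • x - B x h • h = 0 := hy
      rw [hxh, zero_smul, sub_zero, smul_eq_zero] at hy'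
      exact hy'.elim hh.ne' hx
    have : B h h * B x x = B x h ^ 2 := by
      simp only [hy, map_zero] at hyy
      linear_combination (mul_eq_zero.mp hyy.symm).resolve_left hh.ne'
    nlinarith [sq_pos_of_ne_zero hxh]
  · nlinarith [hneg y hyh hy, sq_nonneg (B x h)]

end OrderedField

theorem finite_setOf_apply_one_tmul_self_le {L : Type*} [AddCommGroup L] [Module ℤ L]
    [Module.Free ℤ L] [Module.Finite ℤ L] {Q : BilinForm ℝ (ℝ ⊗[ℤ] L)} (hQ : Q.IsSymm)
    (hpos : ∀ x, x ≠ 0 → 0 < Q x x) (c : ℝ) :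
    {v : L | Q (1 ⊗ₜ v) (1 ⊗ₜ v) ≤ c}.Finite := by
  classical
  let b := Module.Free.chooseBasis ℤ L
  have hnonneg : ∀ x, 0 ≤ Q x x := fun x => by
    rcases eq_or_ne x 0 with rfl | hx
    · simp
    · exact (hpos x hx).le
  have hQnd : Q.Nondegenerate := ⟨fun x hx => by_contra fun h0 => (hpos x h0).ne' (hx x),
    fun x hx => by_contra fun h0 => (hpos x h0).ne' (hx x)⟩
  -- coordinates in `b` are read off by pairing with the `Q`-dual basis `g`
  let g := Q.flip.dualBasis hQnd.flip (b.baseChange ℝ)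
  have hcoord : ∀ v i, (b.repr v i : ℝ) = Q (1 ⊗ₜ v) (g i) := fun v i => by
    rw [← dualBasis_repr_apply hQnd, dualBasis_dualBasis_flip, Basis.baseChange_repr_tmul]
    simp
  have hbound : ∀ v ∈ {v : L | Q (1 ⊗ₜ v) (1 ⊗ₜ v) ≤ c}, ∀ i,
      b.equivFun v i ∈ Metric.closedBall 0 √(c * Q (g i) (g i)) := fun v hv i => by
    rw [mem_closedBall_zero_iff, Int.norm_eq_abs, Basis.equivFun_apply, hcoord]
    refine Real.abs_le_sqrt <| (Q.apply_sq_le_of_symm hnonneg (isSymm_iff.mp hQ) _ _).trans ?_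
    exact mul_le_mul_of_nonneg_right hv (hnonneg _)
  exact (Set.Finite.pi' fun i => (isCompact_closedBall _ _).finite_of_discrete).preimage
    b.equivFun.injective.injOn |>.subset hbound

end LinearMap.BilinForm

open LinearMap.BilinForm

/-- Let `L` be a free `ℤ`-module of finite rank with a symmetric bilinear form
`B` whose extension to `L ⊗ ℝ` has signature `(1, k)`, and let `h ∈ L` with `B(h,h) > 0`. Then
the group of `ℤ`-linear automorphisms of `L` preserving `B` and fixing `h` is finite. -/
theorem finite_stabilizer_of_positive_vector
    (L : Type*) [AddCommGroup L] [Module ℤ L] [Module.Free ℤ L] [Module.Finite ℤ L]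
    (B : LinearMap.BilinForm ℤ L)
    (hsymm : ∀ v w : L, B v w = B w v)
    (k : ℕ) (e : Module.Basis (Fin (k + 1)) ℝ (ℝ ⊗[ℤ] L))
    (horth : ∀ i j : Fin (k + 1), i ≠ j → (B.baseChange ℝ) (e i) (e j) = 0)
    (hpos : 0 < (B.baseChange ℝ) (e 0) (e 0))
    (hneg : ∀ i : Fin (k + 1), i ≠ 0 → (B.baseChange ℝ) (e i) (e i) < 0)
    (h : L) (hh : 0 < B h h) :
    Finite {f : L ≃ₗ[ℤ] L // (∀ v w : L, B (f v) (f w) = B v w) ∧ f h = h} := by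
  set B' := B.baseChange ℝ
  have hB' : B'.IsSymm := isSymm_iff.mpr (IsSymm.baseChange ℝ ⟨hsymm⟩)
  have hB'_tmul : ∀ v w, B' (1 ⊗ₜ v) (1 ⊗ₜ w) = B v w := fun v w => by simp [B']
  have hh' : 0 < B' (1 ⊗ₜ h) (1 ⊗ₜ h) := by simpa [hB'_tmul]
  have hneg_h : B'.NegDefOnOrthogonal (1 ⊗ₜ h) :=
    (negDefOnOrthogonal_of_iIsOrtho horth hpos.ne' hneg).of_pos hB' hh'
  let q : L → ℝ := fun v => B'.majorant (1 ⊗ₜ h) (1 ⊗ₜ v) (1 ⊗ₜ v)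
  have hq : ∀ a, {v | q v = a}.Finite := fun a =>
    (finite_setOf_apply_one_tmul_self_le (hB'.majorant _)
      (fun _ hx => majorant_apply_self_pos hB' hh' hneg_h hx) a).subset fun _ => le_of_eq
  have hq_inv (f : L ≃ₗ[ℤ] L) (hf : ∀ v w, B (f v) (f w) = B v w) (hfh : f h = h) (v : L) :
      q (f v) = q v := by
    have hfix : B (f v) h = B v h := by conv_lhs => rw [← hfh]; exact hf v h
    simp only [q, majorant_apply, hB'_tmul, hfix, hf]
  exact ((Module.Finite.finite_linearEquiv_of_finite_fibers q hq).subset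
    fun f hf => hq_inv f hf.1 hf.2).to_subtype
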